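/- Let R = 𝔽₂[x, y, z]/I where I = (x² + x, y² + y, z² + z, xy + z, xz + z, yz + z). Then R is isomorphic as a ring to 𝔽₂ × 𝔽₂ × 𝔽₂ × 𝔽₂. -/
import Mathlib


open MvPolynomial

noncomputable abbrev stmt19X : MvPolynomial (Fin 3) (ZMod 2) := X 0
noncomputable abbrev stmt19Y : MvPolynomial (Fin 3) (ZMod 2) := X 1
noncomputable abbrev stmt19Z : MvPolynomial (Fin 3) (ZMod 2) := X 2

/-- The ideal `I = (x² + x, y² + y, z² + z, xy + z, xz + z, yz + z)`
of `𝔽₂[x, y, z]`. -/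
noncomputable abbrev stmt19I : Ideal (MvPolynomial (Fin 3) (ZMod 2)) :=
  Ideal.span {stmt19X ^ 2 + stmt19X, stmt19Y ^ 2 + stmt19Y, stmt19Z ^ 2 + stmt19Z,
    stmt19X * stmt19Y + stmt19Z, stmt19X * stmt19Z + stmt19Z,
    stmt19Y * stmt19Z + stmt19Z}

/-- Evaluation at the four common zeros `(0,0,0), (1,0,0), (0,1,0), (1,1,1)`. -/
noncomputable def phi19 : MvPolynomial (Fin 3) (ZMod 2) →+*
    ZMod 2 × ZMod 2 × ZMod 2 × ZMod 2 :=
  (eval ![0,0,0]).prod ((eval ![1,0,0]).prod ((eval ![0,1,0]).prod (eval ![1,1,1])))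

lemma htwo19 : (2 : MvPolynomial (Fin 3) (ZMod 2)) = 0 := by
  have h : (2 : MvPolynomial (Fin 3) (ZMod 2)) = C 1 + C 1 := by rw [C_1]; norm_num
  rw [h, ← map_add, show (1 + 1 : ZMod 2) = 0 from rfl, map_zero]

lemma mem_stmt19I (p c1 c2 c3 c4 c5 c6 : MvPolynomial (Fin 3) (ZMod 2))
    (h : p = c1 * (X 0 ^ 2 + X 0) + c2 * (X 1 ^ 2 + X 1) + c3 * (X 2 ^ 2 + X 2)
      + c4 * (X 0 * X 1 + X 2) + c5 * (X 0 * X 2 + X 2) + c6 * (X 1 * X 2 + X 2)) :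
    p ∈ stmt19I := by
  rw [h]
  refine add_mem (add_mem (add_mem (add_mem (add_mem ?_ ?_) ?_) ?_) ?_) ?_ <;>
    refine Ideal.mul_mem_left _ _ (Ideal.subset_span ?_) <;>
    simp [Set.mem_insert_iff, stmt19X, stmt19Y, stmt19Z]

lemma ker19 : ∀ a ∈ stmt19I, phi19 a = 0 := by
  have hle : stmt19I ≤ RingHom.ker phi19 := by
    rw [Ideal.span_le]
    rintro g hg
    simp only [Set.mem_insert_iff, Set.mem_singleton_iff, stmt19X, stmt19Y, stmt19Z] at hg
    have comp : ∀ p : MvPolynomial (Fin 3) (ZMod 2),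
        eval ![0,0,0] p = 0 → eval ![1,0,0] p = 0 → eval ![0,1,0] p = 0 →
        eval ![1,1,1] p = 0 → p ∈ (RingHom.ker phi19 : Set _) := by
      intro p h1 h2 h3 h4
      show p ∈ RingHom.ker phi19
      rw [RingHom.mem_ker]
      simp only [phi19, RingHom.prod_apply, Prod.ext_iff, Prod.fst_zero, Prod.snd_zero]
      exact ⟨h1, h2, h3, h4⟩
    rcases hg with rfl | rfl | rfl | rfl | rfl | rfl <;>
      refine comp _ ?_ ?_ ?_ ?_ <;> · simp; try decide
  exact fun a ha => (RingHom.mem_ker).mp (hle ha)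

set_option maxHeartbeats 1000000 in
/-- `R = 𝔽₂[x,y,z]/(x²+x, y²+y, z²+z, xy+z, xz+z, yz+z)` is isomorphic as a ring
to `𝔽₂ × 𝔽₂ × 𝔽₂ × 𝔽₂`. -/
theorem stmt_19 :
    Nonempty ((MvPolynomial (Fin 3) (ZMod 2) ⧸ stmt19I)
      ≃+* (ZMod 2 × ZMod 2 × ZMod 2 × ZMod 2)) := by
  let q : MvPolynomial (Fin 3) (ZMod 2) →+* MvPolynomial (Fin 3) (ZMod 2) ⧸ stmt19I :=
    Ideal.Quotient.mk stmt19I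
  let Φ := Ideal.Quotient.lift stmt19I phi19 ker19
  have hΦ : ∀ p, Φ (q p) = phi19 p := fun p => rfl
  -- the four indicator polynomials
  set p1 : MvPolynomial (Fin 3) (ZMod 2) := (1 + X 0) * ((1 + X 1) * (1 + X 2)) with hp1
  set p2 : MvPolynomial (Fin 3) (ZMod 2) := X 0 * ((1 + X 1) * (1 + X 2)) with hp2
  set p3 : MvPolynomial (Fin 3) (ZMod 2) := (1 + X 0) * (X 1 * (1 + X 2)) with hp3
  set p4 : MvPolynomial (Fin 3) (ZMod 2) := X 0 * (X 1 * X 2) with hp4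
  have hsum : q p1 + q p2 + q p3 + q p4 = 1 := by
    rw [show (1 : MvPolynomial (Fin 3) (ZMod 2) ⧸ stmt19I) = q 1 from rfl,
      ← map_add, ← map_add, ← map_add, Ideal.Quotient.eq]
    refine mem_stmt19I _ 0 0 0 1 0 0 ?_
    linear_combination (2*X 0*X 1*X 2 + X 0*X 1 + X 0*X 2 + X 0 + X 1*X 2 + X 1) * htwo19
  -- indicator identities : X i * p_j ≡ (value of X i at point j) * p_j mod I
  have L00 : q (X 0) * q p1 = 0 := by
    rw [← map_mul, show (0 : MvPolynomial (Fin 3) (ZMod 2) ⧸ stmt19I) = q 0 from rfl,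
      Ideal.Quotient.eq]
    exact mem_stmt19I _ (X 1*X 2 + X 1 + X 2 + 1) 0 0 0 0 0 (by ring)
  have L01 : q (X 0) * q p2 = q p2 := by
    rw [← map_mul, Ideal.Quotient.eq]
    refine mem_stmt19I _ (X 1*X 2 + X 1 + X 2 + 1) 0 0 0 0 0 ?_
    linear_combination (-(X 0*X 1*X 2) - X 0*X 1 - X 0*X 2 - X 0) * htwo19
  have L02 : q (X 0) * q p3 = 0 := by
    rw [← map_mul, show (0 : MvPolynomial (Fin 3) (ZMod 2) ⧸ stmt19I) = q 0 from rfl,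
      Ideal.Quotient.eq]
    exact mem_stmt19I _ (X 1*X 2 + X 1) 0 0 0 0 0 (by ring)
  have L03 : q (X 0) * q p4 = q p4 := by
    rw [← map_mul, Ideal.Quotient.eq]
    refine mem_stmt19I _ (X 1*X 2) 0 0 0 0 0 ?_
    linear_combination (-(X 0*X 1*X 2)) * htwo19
  have L10 : q (X 1) * q p1 = 0 := by
    rw [← map_mul, show (0 : MvPolynomial (Fin 3) (ZMod 2) ⧸ stmt19I) = q 0 from rfl,
      Ideal.Quotient.eq]
    exact mem_stmt19I _ 0 (X 0*X 2 + X 0 + X 2 + 1) 0 0 0 0 (by ring)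
  have L11 : q (X 1) * q p2 = 0 := by
    rw [← map_mul, show (0 : MvPolynomial (Fin 3) (ZMod 2) ⧸ stmt19I) = q 0 from rfl,
      Ideal.Quotient.eq]
    exact mem_stmt19I _ 0 (X 0*X 2 + X 0) 0 0 0 0 (by ring)
  have L12 : q (X 1) * q p3 = q p3 := by
    rw [← map_mul, Ideal.Quotient.eq]
    refine mem_stmt19I _ 0 (X 0*X 2 + X 0 + X 2 + 1) 0 0 0 0 ?_
    linear_combination (-(X 0*X 1*X 2) - X 0*X 1 - X 1*X 2 - X 1) * htwo19
  have L13 : q (X 1) * q p4 = q p4 := by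
    rw [← map_mul, Ideal.Quotient.eq]
    refine mem_stmt19I _ 0 (X 0*X 2) 0 0 0 0 ?_
    linear_combination (-(X 0*X 1*X 2)) * htwo19
  have L20 : q (X 2) * q p1 = 0 := by
    rw [← map_mul, show (0 : MvPolynomial (Fin 3) (ZMod 2) ⧸ stmt19I) = q 0 from rfl,
      Ideal.Quotient.eq]
    exact mem_stmt19I _ 0 0 (X 0*X 1 + X 0 + X 1 + 1) 0 0 0 (by ring)
  have L21 : q (X 2) * q p2 = 0 := by
    rw [← map_mul, show (0 : MvPolynomial (Fin 3) (ZMod 2) ⧸ stmt19I) = q 0 from rfl,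
      Ideal.Quotient.eq]
    exact mem_stmt19I _ 0 0 (X 0*X 1 + X 0) 0 0 0 (by ring)
  have L22 : q (X 2) * q p3 = 0 := by
    rw [← map_mul, show (0 : MvPolynomial (Fin 3) (ZMod 2) ⧸ stmt19I) = q 0 from rfl,
      Ideal.Quotient.eq]
    exact mem_stmt19I _ 0 0 (X 0*X 1 + X 1) 0 0 0 (by ring)
  have L23 : q (X 2) * q p4 = q p4 := by
    rw [← map_mul, Ideal.Quotient.eq]
    refine mem_stmt19I _ 0 0 (X 0*X 1) 0 0 0 ?_
    linear_combination (-(X 0*X 1*X 2)) * htwo19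
  -- the key reconstruction identity
  have key : ∀ p : MvPolynomial (Fin 3) (ZMod 2),
      q (C (eval ![0,0,0] p)) * q p1 + q (C (eval ![1,0,0] p)) * q p2
        + q (C (eval ![0,1,0] p)) * q p3 + q (C (eval ![1,1,1] p)) * q p4 = q p := by
    intro p
    induction p using MvPolynomial.induction_on with
    | C r =>
        simp only [eval_C]
        linear_combination (q (C r)) * hsum
    | add f g hf hg =>
        simp only [map_add]
        linear_combination hf + hg
    | mul_X f n hf =>
        have hm : q (f * X n) = q f * q (X n) := map_mul q f (X n)
        rw [hm, ← hf]
        simp only [eval_mul, eval_X]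
        have e2 : (⟨2, by norm_num⟩ : Fin 3) = 2 := rfl
        fin_cases n <;>
          simp only [Fin.mk_zero, Fin.mk_one, e2, Fin.isValue, Matrix.cons_val_zero,
            Matrix.cons_val_one, Matrix.head_cons, Matrix.cons_val_two, Matrix.tail_cons,
            mul_zero, mul_one, map_zero, map_one, C_0, C_1, zero_mul, one_mul, add_zero,
            zero_add]
        · linear_combination (-(q (C (eval ![0,0,0] f)))) * L00
            + (-(q (C (eval ![1,0,0] f)))) * L01 + (-(q (C (eval ![0,1,0] f)))) * L02
            + (-(q (C (eval ![1,1,1] f)))) * L03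
        · linear_combination (-(q (C (eval ![0,0,0] f)))) * L10
            + (-(q (C (eval ![1,0,0] f)))) * L11 + (-(q (C (eval ![0,1,0] f)))) * L12
            + (-(q (C (eval ![1,1,1] f)))) * L13
        · linear_combination (-(q (C (eval ![0,0,0] f)))) * L20
            + (-(q (C (eval ![1,0,0] f)))) * L21 + (-(q (C (eval ![0,1,0] f)))) * L22
            + (-(q (C (eval ![1,1,1] f)))) * L23
  have hinj : Function.Injective Φ := by
    intro r s hrs
    obtain ⟨f, rfl⟩ := Ideal.Quotient.mk_surjective r
    obtain ⟨g, rfl⟩ := Ideal.Quotient.mk_surjective s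
    have h1 : phi19 f = phi19 g := by rw [← hΦ, ← hΦ]; exact hrs
    have h1' : (eval ![0,0,0] f = eval ![0,0,0] g) ∧ (eval ![1,0,0] f = eval ![1,0,0] g)
        ∧ (eval ![0,1,0] f = eval ![0,1,0] g) ∧ (eval ![1,1,1] f = eval ![1,1,1] g) := by
      simpa [phi19, Prod.ext_iff] using h1
    calc q f = _ := (key f).symm
    _ = _ := by rw [h1'.1, h1'.2.1, h1'.2.2.1, h1'.2.2.2]
    _ = q g := key g
  have hsurj : Function.Surjective Φ := by
    intro t
    obtain ⟨w, x, y, z⟩ := t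
    refine ⟨q (C w * p1 + C x * p2 + C y * p3 + C z * p4), ?_⟩
    rw [hΦ]
    simp only [phi19, RingHom.prod_apply, Prod.ext_iff]
    refine ⟨?_, ?_, ?_, ?_⟩ <;>
      · simp [hp1, hp2, hp3, hp4, show ((1:ZMod 2) + 1) = 0 from rfl]
  exact ⟨RingEquiv.ofBijective Φ ⟨hinj, hsurj⟩⟩
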